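/- arXiv:2408.17109 — 2 statements merged into one kernel-verified Lean document; each statement's English description precedes it below -/
import Mathlib

section
/- Let μ and ν be probability measures on X = C_0([0,T]; ℝ^d) under each of which every coordinate X_t of the canonical process is integrable and the canonical process is a martingale with respect to the right-continuous natural filtration. Then for every bicausal coupling π of (μ, ν), the ℝ^{2d}-valued process (X_t, Y_t)_{t ∈ [0,T]} formed by the two canonical coordinate processes is a martingale under π with respect to the product filtration (F_t ⊗ G_t)_{t ∈ [0,T]}. -/
open MeasureTheory Filter Set

noncomputable section

/-- The path space `C_0([0,T]; ℝ^d)`: functions `ℝ → ℝ^d` that are continuous on `[0,T]`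
and vanish at `0`. -/
def ContPath (T : ℝ) (d : ℕ) : Type :=
  {ω : ℝ → Fin d → ℝ // ContinuousOn ω (Set.Icc 0 T) ∧ ω 0 = 0}

/-- The σ-algebra `σ(ω_r : r ∈ [0,T], r ≤ s)` generated by the evaluations up to time `s`. -/
def evalSigma (T : ℝ) (d : ℕ) (s : ℝ) : MeasurableSpace (ContPath T d) :=
  ⨆ r : {r : ℝ // 0 ≤ r ∧ r ≤ T ∧ r ≤ s},
    MeasurableSpace.comap (fun ω : ContPath T d => ω.1 r.1) inferInstance

/-- The ambient σ-algebra on the path space is `σ(ω_r : r ∈ [0,T])`. -/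
instance instMSContPath (T : ℝ) (d : ℕ) : MeasurableSpace (ContPath T d) := evalSigma T d T

/-- The right-continuous natural filtration `F_t = ⋂_{s > t} σ(ω_r : r ≤ s)`
(with `F_T = σ(ω_r : r ≤ T)`). -/
def FilC (T : ℝ) (d : ℕ) (t : ℝ) : MeasurableSpace (ContPath T d) :=
  if t < T then ⨅ s : {s : ℝ // t < s ∧ s ≤ T}, evalSigma T d s.1 else evalSigma T d T

/-- Conditional independence of `m₁` and `m₂` given `m'` under `π`, expressed through
conditional expectations of indicators. -/
def CondIndepOn {Ω : Type*} [MeasurableSpace Ω] (π : Measure Ω)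
    (m' m₁ m₂ : MeasurableSpace Ω) : Prop :=
  ∀ A B : Set Ω, MeasurableSet[m₁] A → MeasurableSet[m₂] B →
    (π[(A ∩ B).indicator (fun _ => (1 : ℝ)) | m']) =ᵐ[π]
      (π[A.indicator (fun _ => (1 : ℝ)) | m']) * (π[B.indicator (fun _ => (1 : ℝ)) | m'])

/-- `π` is a coupling with first marginal `μ` which is causal to its second marginal:
for every `t ∈ [0,T]`, `σ(Y_s : s ≤ t)` is conditionally independent of
`σ(X_s : s ≤ T)` given `F_t`. -/
def IsCausalStarC (T : ℝ) (d : ℕ) (μ : Measure (ContPath T d))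
    (π : Measure (ContPath T d × ContPath T d)) : Prop :=
  π.map Prod.fst = μ ∧
  ∀ t ∈ Set.Icc (0 : ℝ) T,
    CondIndepOn π ((FilC T d t).comap Prod.fst)
      ((FilC T d t).comap Prod.snd) ((evalSigma T d T).comap Prod.fst)

/-- `π` is a causal coupling of `(μ, ν)`. -/
def IsCausalCouplingC (T : ℝ) (d : ℕ) (μ ν : Measure (ContPath T d))
    (π : Measure (ContPath T d × ContPath T d)) : Prop :=
  π.map Prod.snd = ν ∧ IsCausalStarC T d μ π

/-- `π` is a bicausal coupling of `(μ, ν)`: both `π` and its swap are causal. -/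
def IsBicausalCouplingC (T : ℝ) (d : ℕ) (μ ν : Measure (ContPath T d))
    (π : Measure (ContPath T d × ContPath T d)) : Prop :=
  IsCausalCouplingC T d μ ν π ∧
  ∀ t ∈ Set.Icc (0 : ℝ) T,
    CondIndepOn π ((FilC T d t).comap Prod.snd)
      ((FilC T d t).comap Prod.fst) ((evalSigma T d T).comap Prod.snd)

/-- `μ` is a martingale measure on `C_0([0,T]; ℝ^d)`: every coordinate `X_t`, `t ∈ [0,T]`,
is integrable and the canonical process is a martingale with respect to the right-continuous
natural filtration. -/
def IsMartingaleMeasureC (T : ℝ) (d : ℕ) (μ : Measure (ContPath T d)) : Prop :=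
  (∀ t ∈ Set.Icc (0 : ℝ) T, Integrable (fun ω : ContPath T d => ω.1 t) μ) ∧
  ∀ s t : ℝ, 0 ≤ s → s ≤ t → t ≤ T →
    (μ[(fun ω : ContPath T d => ω.1 t) | FilC T d s]) =ᵐ[μ] (fun ω => ω.1 s)

end

/-! It suffices to check `∫_C X_t dπ = ∫_C X_s dπ` (and the same for `Y`) on the π-system of
rectangles `C = A ∩ B` with `A ∈ F_s` read on `X` and `B ∈ G_s` read on `Y`. Causality says that
given `F_s`, the event `B` is conditionally independent of the whole path `X`, so
`E[1_B | σ(X)] = E[1_B | F_s]`. Hence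
`E[X_t 1_A 1_B] = E[X_t 1_A E[1_B | F_s]] = E[X_s 1_A E[1_B | F_s]] = E[X_s 1_A 1_B]`,
the middle step being the martingale property of the first marginal `μ`. Causality of the
swapped coupling gives the same for `Y`. -/

section CondExp

variable {α E : Type*} {m m' m₁ m₂ m₀ : MeasurableSpace α} {π : Measure α}
  [NormedAddCommGroup E] [NormedSpace ℝ E]

theorem indicator_one_smul (s : Set α) (f : α → E) :
    (s.indicator fun _ => (1 : ℝ)) • f = s.indicator f := by
  ext x
  simp only [Pi.smul_apply', ← indicator_smul_apply_left, one_smul]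

theorem setIntegral_eq_integral_indicator_one_smul {s : Set α} (hs : MeasurableSet s)
    (f : α → E) : ∫ x in s, f x ∂π = ∫ x, s.indicator (fun _ => (1 : ℝ)) x • f x ∂π := by
  rw [← integral_indicator hs, ← indicator_one_smul]
  rfl

theorem setIntegral_eq_of_forall_inter {mA mB : MeasurableSpace α} (hA : mA ≤ m₀) (hB : mB ≤ m₀)
    {u v : α → E} (hu : Integrable u π) (hv : Integrable v π)
    (h : ∀ A B, MeasurableSet[mA] A → MeasurableSet[mB] B →
      ∫ x in A ∩ B, u x ∂π = ∫ x in A ∩ B, v x ∂π)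
    {C : Set α} (hC : MeasurableSet[mA ⊔ mB] C) : ∫ x in C, u x ∂π = ∫ x in C, v x ∂π := by
  set S := image2 (· ∩ ·) {A | MeasurableSet[mA] A} {B | MeasurableSet[mB] B}
  have hgen : mA ⊔ mB = MeasurableSpace.generateFrom S := by
    refine le_antisymm (sup_le (fun A hA => ?_) (fun B hB => ?_))
      (MeasurableSpace.generateFrom_le ?_)
    · exact .basic _ ⟨A, hA, univ, MeasurableSet.univ, inter_univ A⟩
    · exact .basic _ ⟨univ, MeasurableSet.univ, B, hB, univ_inter B⟩
    · rintro _ ⟨A, hA, B, hB, rfl⟩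
      exact (le_sup_left (b := mB) _ hA).inter (le_sup_right (a := mA) _ hB)
  have hpi : IsPiSystem S := by
    rintro _ ⟨A₁, hA₁, B₁, hB₁, rfl⟩ _ ⟨A₂, hA₂, B₂, hB₂, rfl⟩ -
    exact ⟨A₁ ∩ A₂, hA₁.inter hA₂, B₁ ∩ B₂, hB₁.inter hB₂, inter_inter_inter_comm _ _ _ _⟩
  have hsup : mA ⊔ mB ≤ m₀ := sup_le hA hB
  have huniv : ∫ x, u x ∂π = ∫ x, v x ∂π := by
    simpa using h univ univ MeasurableSet.univ MeasurableSet.univ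
  induction C, hC using MeasurableSpace.induction_on_inter hgen hpi with
  | empty => simp
  | basic _ hS =>
    obtain ⟨A, hA, B, hB, rfl⟩ := hS
    exact h A B hA hB
  | compl C hC ih =>
    rw [setIntegral_compl (hsup _ hC) hu, setIntegral_compl (hsup _ hC) hv, ih, huniv]
  | iUnion C hdisj hC ih =>
    rw [integral_iUnion (fun n => hsup _ (hC n)) hdisj hu.integrableOn,
      integral_iUnion (fun n => hsup _ (hC n)) hdisj hv.integrableOn]
    exact tsum_congr ih

variable [IsFiniteMeasure π] [CompleteSpace E]

theorem MeasureTheory.MeasurePreserving.condExp_comp_ae_eq {β : Type*} {m : MeasurableSpace β}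
    [mβ : MeasurableSpace β] {μ : Measure β} {φ : α → β} (hφ : MeasurePreserving φ π μ)
    (hm : m ≤ mβ) {h : β → E} (hh : Integrable h μ) :
    π[h ∘ φ | m.comap φ] =ᵐ[π] μ[h | m] ∘ φ := by
  obtain ⟨hφ, rfl⟩ := hφ
  have hcm : m.comap φ ≤ m₀ := (MeasurableSpace.comap_mono hm).trans hφ.comap_le
  have hcomp {g : β → E} (hg : Integrable g (π.map φ)) : Integrable (g ∘ φ) π :=
    hg.comp_measurable hφ
  refine (ae_eq_condExp_of_forall_setIntegral_eq hcm (hcomp hh)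
    (fun _ _ _ => (hcomp integrable_condExp).integrableOn) ?_
    (stronglyMeasurable_condExp.comp_measurable (comap_measurable φ)).aestronglyMeasurable).symm
  rintro _ ⟨u, hu, rfl⟩ -
  have hu₀ : MeasurableSet u := hm _ hu
  calc ∫ a in φ ⁻¹' u, (π.map φ)[h | m] (φ a) ∂π
      = ∫ b in u, (π.map φ)[h | m] b ∂π.map φ :=
        (setIntegral_map hu₀ integrable_condExp.aestronglyMeasurable hφ.aemeasurable).symm
    _ = ∫ b in u, h b ∂π.map φ := setIntegral_condExp hm hh hu
    _ = ∫ a in φ ⁻¹' u, h (φ a) ∂π := setIntegral_map hu₀ hh.aestronglyMeasurable hφ.aemeasurable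

theorem integral_smul_condExp (hm : m ≤ m₀) {f : α → ℝ} {g : α → E}
    (hf : AEStronglyMeasurable[m] f π) (hfg : Integrable (f • g) π) (hg : Integrable g π) :
    ∫ x, f x • π[g | m] x ∂π = ∫ x, f x • g x ∂π :=
  (integral_congr_ae (condExp_smul_of_aestronglyMeasurable_left hf hfg hg)).symm.trans
    (integral_condExp hm)

theorem integral_condExp_smul (hm : m ≤ m₀) {f : α → ℝ} {g : α → E}
    (hf : Integrable f π) (hfg : Integrable (f • g) π) (hg : AEStronglyMeasurable[m] g π) :
    ∫ x, π[f | m] x • g x ∂π = ∫ x, f x • g x ∂π :=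
  (integral_congr_ae (condExp_smul_of_aestronglyMeasurable_right hf hfg hg)).symm.trans
    (integral_condExp hm)

theorem CondIndepOn.condExp_indicator_eq (hci : CondIndepOn π m' m₁ m₂) (hm' : m' ≤ m₂)
    (hm₂ : m₂ ≤ m₀) {B : Set α} (hB : MeasurableSet[m₁] B) (hB₀ : MeasurableSet B) :
    π[B.indicator (fun _ => (1 : ℝ)) | m₂] =ᵐ[π] π[B.indicator (fun _ => (1 : ℝ)) | m'] := by
  have h1 {s : Set α} (hs : MeasurableSet s) : Integrable (s.indicator fun _ => (1 : ℝ)) π :=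
    (integrable_const 1).indicator hs
  refine (ae_eq_condExp_of_forall_setIntegral_eq hm₂ (h1 hB₀)
    (fun _ _ _ => integrable_condExp.integrableOn) (fun C hC _ => ?_)
    (stronglyMeasurable_condExp.mono hm').aestronglyMeasurable).symm
  have hC₀ : MeasurableSet C := hm₂ _ hC
  set iB := B.indicator fun _ => (1 : ℝ)
  calc ∫ x in C, π[iB | m'] x ∂π
      = ∫ x, π[C.indicator (fun _ => (1 : ℝ)) | m'] x • π[iB | m'] x ∂π := by
        rw [setIntegral_eq_integral_indicator_one_smul hC₀]
        refine (integral_condExp_smul (hm'.trans hm₂) (h1 hC₀) ?_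
          stronglyMeasurable_condExp.aestronglyMeasurable).symm
        rw [indicator_one_smul]
        exact integrable_condExp.indicator hC₀
    _ = ∫ x, π[(B ∩ C).indicator (fun _ => (1 : ℝ)) | m'] x ∂π := by
        refine integral_congr_ae ?_
        filter_upwards [hci B C hB hC] with x hx
        rw [hx, smul_eq_mul, mul_comm]
        rfl
    _ = ∫ x in C, iB x ∂π := by
        rw [integral_condExp (hm'.trans hm₂), ← integral_indicator hC₀, indicator_indicator,
          inter_comm]

theorem CondIndepOn.setIntegral_condExp_eq (hci : CondIndepOn π m' m₁ m₂) (hm' : m' ≤ m₂)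
    (hm₂ : m₂ ≤ m₀) {u : α → E} (hu : Integrable u π) (hum : StronglyMeasurable[m₂] u)
    {B : Set α} (hB : MeasurableSet[m₁] B) (hB₀ : MeasurableSet B) :
    ∫ x in B, π[u | m'] x ∂π = ∫ x in B, u x ∂π := by
  set iB := B.indicator fun _ => (1 : ℝ)
  have hiB : Integrable iB π := (integrable_const 1).indicator hB₀
  have hiB_smul {f : α → E} (hf : Integrable f π) : Integrable (iB • f) π := by
    rw [indicator_one_smul]
    exact hf.indicator hB₀
  have hbdd : ∀ᵐ x ∂π, ‖π[iB | m'] x‖ ≤ 1 := by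
    refine ae_bdd_abs_condExp_of_ae_bdd_abs (Eventually.of_forall fun x => ?_)
    by_cases hx : x ∈ B <;> simp [iB, hx]
  simp only [setIntegral_eq_integral_indicator_one_smul hB₀]
  calc ∫ x, iB x • π[u | m'] x ∂π
      = ∫ x, π[iB | m'] x • π[u | m'] x ∂π :=
        (integral_condExp_smul (hm'.trans hm₂) hiB (hiB_smul integrable_condExp)
          stronglyMeasurable_condExp.aestronglyMeasurable).symm
    _ = ∫ x, π[iB | m'] x • u x ∂π :=
        integral_smul_condExp (hm'.trans hm₂) stronglyMeasurable_condExp.aestronglyMeasurable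
          (hu.bdd_smul 1 (integrable_condExp.aestronglyMeasurable) hbdd) hu
    _ = ∫ x, π[iB | m₂] x • u x ∂π := by
        refine integral_congr_ae ?_
        filter_upwards [hci.condExp_indicator_eq hm' hm₂ hB hB₀] with x hx
        rw [hx]
    _ = ∫ x, iB x • u x ∂π := integral_condExp_smul hm₂ hiB (hiB_smul hu) hum.aestronglyMeasurable

theorem CondIndepOn.setIntegral_inter_condExp_eq (hci : CondIndepOn π m' m₁ m₂)
    (hm' : m' ≤ m₂) (hm₂ : m₂ ≤ m₀) (hm₁ : m₁ ≤ m₀) {u : α → E} (hu : Integrable u π)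
    (hum : StronglyMeasurable[m₂] u) {A B : Set α} (hA : MeasurableSet[m'] A)
    (hB : MeasurableSet[m₁] B) :
    ∫ x in A ∩ B, π[u | m'] x ∂π = ∫ x in A ∩ B, u x ∂π := by
  have hA₀ : MeasurableSet A := hm₂ _ (hm' _ hA)
  rw [inter_comm, ← setIntegral_indicator hA₀, ← setIntegral_indicator hA₀,
    ← integral_congr_ae (ae_restrict_of_ae (condExp_indicator hu hA))]
  exact hci.setIntegral_condExp_eq hm' hm₂ (hu.indicator hA₀)
    (hum.indicator (hm' _ hA)) hB (hm₁ _ hB)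

end CondExp

section PathSpace

variable {T : ℝ} {d : ℕ}

theorem measurable_evalSigma_eval {s t : ℝ} (ht₀ : 0 ≤ t) (htT : t ≤ T) (hts : t ≤ s) :
    Measurable[evalSigma T d s] fun ω : ContPath T d => ω.1 t :=
  (comap_measurable _).mono (le_iSup (fun r : {r : ℝ // 0 ≤ r ∧ r ≤ T ∧ r ≤ s} =>
    MeasurableSpace.comap (fun ω : ContPath T d => ω.1 r.1) inferInstance) ⟨t, ht₀, htT, hts⟩)
    le_rfl

theorem FilC_le_evalSigma (s : ℝ) : FilC T d s ≤ evalSigma T d T := by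
  unfold FilC
  split_ifs with h
  · exact iInf_le_of_le ⟨T, h, le_rfl⟩ le_rfl
  · exact le_rfl

theorem measurable_FilC_eval {s t : ℝ} (ht₀ : 0 ≤ t) (htT : t ≤ T) (hts : t ≤ s) :
    Measurable[FilC T d s] fun ω : ContPath T d => ω.1 t := by
  by_cases h : s < T
  · rw [FilC, if_pos h]
    exact fun U hU => MeasurableSpace.measurableSet_iInf.mpr fun r =>
      measurable_evalSigma_eval ht₀ htT (hts.trans r.2.1.le) hU
  · rw [FilC, if_neg h]
    exact measurable_evalSigma_eval ht₀ htT htT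

variable {P : Type*} {m₁ : MeasurableSpace P} [mP : MeasurableSpace P] {π : Measure P}
  [IsFiniteMeasure π] {μ : Measure (ContPath T d)} {p : P → ContPath T d}

theorem Measurable.comap_FilC_le (hp : Measurable p) (s : ℝ) :
    (FilC T d s).comap p ≤ mP :=
  (MeasurableSpace.comap_mono (FilC_le_evalSigma s)).trans hp.comap_le

theorem IsMartingaleMeasureC.condExp_comp_ae_eq (hμ : IsMartingaleMeasureC T d μ)
    (hp : MeasurePreserving p π μ) {s t : ℝ} (hs : 0 ≤ s) (hst : s ≤ t) (htT : t ≤ T) :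
    π[fun z => (p z).1 t | (FilC T d s).comap p] =ᵐ[π] fun z => (p z).1 s :=
  (hp.condExp_comp_ae_eq (FilC_le_evalSigma s) (hμ.1 t ⟨hs.trans hst, htT⟩)).trans
    (hp.quasiMeasurePreserving.ae_eq_comp (hμ.2 s t hs hst htT))

theorem IsMartingaleMeasureC.setIntegral_inter_eq (hμ : IsMartingaleMeasureC T d μ)
    (hp : MeasurePreserving p π μ) (hm₁ : m₁ ≤ mP)
    {s t : ℝ} (hs : 0 ≤ s) (hst : s ≤ t) (htT : t ≤ T)
    (hci : CondIndepOn π ((FilC T d s).comap p) m₁ ((evalSigma T d T).comap p))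
    {A B : Set P} (hA : MeasurableSet[(FilC T d s).comap p] A) (hB : MeasurableSet[m₁] B) :
    ∫ z in A ∩ B, (p z).1 t ∂π = ∫ z in A ∩ B, (p z).1 s ∂π := by
  have hu : StronglyMeasurable[(evalSigma T d T).comap p] fun z => (p z).1 t :=
    ((measurable_evalSigma_eval (hs.trans hst) htT htT).comp
      (comap_measurable p)).stronglyMeasurable
  have hint : Integrable (fun z => (p z).1 t) π :=
    hp.integrable_comp_of_integrable (hμ.1 t ⟨hs.trans hst, htT⟩)
  rw [← hci.setIntegral_inter_condExp_eq (MeasurableSpace.comap_mono (FilC_le_evalSigma s))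
    hp.measurable.comap_le hm₁ hint hu hA hB]
  exact integral_congr_ae (ae_restrict_of_ae (hμ.condExp_comp_ae_eq hp hs hst htT))

end PathSpace

theorem statement_0_general (T : ℝ) (d : ℕ)
    (μ ν : Measure (ContPath T d))
    (hμ : IsMartingaleMeasureC T d μ) (hν : IsMartingaleMeasureC T d ν)
    (π : Measure (ContPath T d × ContPath T d)) [IsProbabilityMeasure π]
    (hπ : IsBicausalCouplingC T d μ ν π) :
    (∀ t ∈ Set.Icc (0 : ℝ) T,
      Integrable (fun z : ContPath T d × ContPath T d => (z.1.1 t, z.2.1 t)) π) ∧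
    ∀ s t : ℝ, 0 ≤ s → s ≤ t → t ≤ T →
      (π[(fun z : ContPath T d × ContPath T d => (z.1.1 t, z.2.1 t)) |
          (FilC T d s).comap Prod.fst ⊔ (FilC T d s).comap Prod.snd]) =ᵐ[π]
        (fun z => (z.1.1 s, z.2.1 s)) := by
  obtain ⟨⟨hmapY, hmapX, hcX⟩, hcY⟩ := hπ
  have hX : MeasurePreserving Prod.fst π μ := ⟨measurable_fst, hmapX⟩
  have hY : MeasurePreserving Prod.snd π ν := ⟨measurable_snd, hmapY⟩
  have hXint : ∀ t ∈ Icc (0 : ℝ) T,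
      Integrable (fun z : ContPath T d × ContPath T d => z.1.1 t) π := fun t ht =>
    hX.integrable_comp_of_integrable (hμ.1 t ht)
  have hYint : ∀ t ∈ Icc (0 : ℝ) T,
      Integrable (fun z : ContPath T d × ContPath T d => z.2.1 t) π := fun t ht =>
    hY.integrable_comp_of_integrable (hν.1 t ht)
  have hint := fun t ht => (hXint t ht).prodMk (hYint t ht)
  refine ⟨hint, fun s t hs hst htT => ?_⟩
  have hsT : s ∈ Icc 0 T := ⟨hs, hst.trans htT⟩
  have htT' : t ∈ Icc 0 T := ⟨hs.trans hst, htT⟩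
  have hFX := hX.measurable.comap_FilC_le s
  have hFY := hY.measurable.comap_FilC_le s
  have hF := measurable_FilC_eval (d := d) hs hsT.2 le_rfl
  have hs_meas : Measurable[(FilC T d s).comap Prod.fst ⊔ (FilC T d s).comap Prod.snd]
      fun z : ContPath T d × ContPath T d => (z.1.1 s, z.2.1 s) :=
    ((hF.comp (comap_measurable _)).mono le_sup_left le_rfl).prodMk
      ((hF.comp (comap_measurable _)).mono le_sup_right le_rfl)
  refine (ae_eq_condExp_of_forall_setIntegral_eq (sup_le hFX hFY) (hint t htT')
    (fun _ _ _ => (hint s hsT).integrableOn) (fun C hC _ => ?_)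
    hs_meas.aestronglyMeasurable).symm
  refine setIntegral_eq_of_forall_inter hFX hFY (hint s hsT) (hint t htT')
    (fun A B hA hB => ?_) hC
  rw [integral_pair (hXint s hsT).integrableOn (hYint s hsT).integrableOn,
    integral_pair (hXint t htT').integrableOn (hYint t htT').integrableOn]
  congr 1
  · exact (hμ.setIntegral_inter_eq hX hFY hs hst htT (hcX s hsT) hA hB).symm
  · rw [inter_comm]
    exact (hν.setIntegral_inter_eq hY hFX hs hst htT (hcY s hsT) hB hA).symm

/-- Let `μ` and `ν` be probability measures on `X = C_0([0,T]; ℝ^d)` under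
each of which every coordinate of the canonical process is integrable and the canonical process
is a martingale with respect to the right-continuous natural filtration. Then for every bicausal
coupling `π` of `(μ, ν)`, the `ℝ^{2d}`-valued process `(X_t, Y_t)_{t ∈ [0,T]}` formed by the two
canonical coordinate processes is a martingale under `π` with respect to the product filtration
`(F_t ⊗ G_t)_{t ∈ [0,T]}`. -/
theorem statement_0 (T : ℝ) (hT : 0 < T) (d : ℕ)
    (μ ν : Measure (ContPath T d)) [IsProbabilityMeasure μ] [IsProbabilityMeasure ν]
    (hμ : IsMartingaleMeasureC T d μ) (hν : IsMartingaleMeasureC T d ν)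
    (π : Measure (ContPath T d × ContPath T d)) [IsProbabilityMeasure π]
    (hπ : IsBicausalCouplingC T d μ ν π) :
    (∀ t ∈ Set.Icc (0 : ℝ) T,
      Integrable (fun z : ContPath T d × ContPath T d => (z.1.1 t, z.2.1 t)) π) ∧
    ∀ s t : ℝ, 0 ≤ s → s ≤ t → t ≤ T →
      (π[(fun z : ContPath T d × ContPath T d => (z.1.1 t, z.2.1 t)) |
          (FilC T d s).comap Prod.fst ⊔ (FilC T d s).comap Prod.snd]) =ᵐ[π]
        (fun z => (z.1.1 s, z.2.1 s)) :=
  statement_0_general T d μ ν hμ hν π hπ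
end

section
/- Let f: D([0,T]; ℝ^d) → ℝ be pathwise Malliavin differentiable with derivative 𝔻f, and assume that f and, for every t ∈ [0,T], the map ω ↦ 𝔻_t f(ω) are continuous with respect to the uniform norm. Then for every ω ∈ D([0,T]; ℝ^d) and every simple step path η = Σ_{k=1}^n e_k 1_{[t_k, T]} (with e_k ∈ ℝ^d and t_k ∈ [0,T]), one has lim_{ε→0} (f(ω + ε η) − f(ω))/ε = Σ_{k=1}^n ⟨𝔻_{t_k} f(ω), e_k⟩. -/
open MeasureTheory Filter Set

noncomputable section

/-- `ω : ℝ → ℝ^d` is càdlàg on `[0,T]`: right-continuous at every `t ∈ [0,T)` (within `[0,T]`)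
and with left limits (within `[0,T]`) at every `t ∈ (0,T]`. -/
def CadlagOn (T : ℝ) {d : ℕ} (ω : ℝ → Fin d → ℝ) : Prop :=
  (∀ t ∈ Set.Ico (0 : ℝ) T, Tendsto ω (nhdsWithin t (Set.Ioc t T)) (nhds (ω t))) ∧
  (∀ t ∈ Set.Ioc (0 : ℝ) T, ∃ l : Fin d → ℝ, Tendsto ω (nhdsWithin t (Set.Ico 0 t)) (nhds l))

/-- The bump path `e·1_{[t,T]}`. -/
def bump (T : ℝ) {d : ℕ} (t : ℝ) (e : Fin d → ℝ) : ℝ → Fin d → ℝ :=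
  Set.indicator (Set.Icc t T) (fun _ => e)

/-- `f` is pathwise Malliavin differentiable on `D([0,T]; ℝ^d)` with derivative `Df`:
for every càdlàg `ω`, every `t ∈ [0,T]` and every `e ∈ ℝ^d`,
`(f(ω + ε e 1_{[t,T]}) − f(ω))/ε → ⟨Df ω t, e⟩` as `ε → 0`. -/
def HasPathwiseMalliavinDeriv (T : ℝ) {d : ℕ} (f : (ℝ → Fin d → ℝ) → ℝ)
    (Df : (ℝ → Fin d → ℝ) → ℝ → Fin d → ℝ) : Prop :=
  ∀ ω : ℝ → Fin d → ℝ, CadlagOn T ω → ∀ t ∈ Set.Icc (0 : ℝ) T, ∀ e : Fin d → ℝ,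
    Tendsto (fun ε : ℝ => (f (ω + ε • bump T t e) - f ω) / ε)
      (nhdsWithin 0 {(0 : ℝ)}ᶜ) (nhds (∑ i, Df ω t i * e i))

/-- Continuity of a real functional on càdlàg paths with respect to the uniform norm on `[0,T]`
(sequential formulation). -/
def UnifContOnCadlag (T : ℝ) {d : ℕ} (f : (ℝ → Fin d → ℝ) → ℝ) : Prop :=
  ∀ (ω : ℝ → Fin d → ℝ) (ωs : ℕ → ℝ → Fin d → ℝ),
    CadlagOn T ω → (∀ n, CadlagOn T (ωs n)) →
    TendstoUniformlyOn ωs ω atTop (Set.Icc 0 T) →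
    Tendsto (fun n => f (ωs n)) atTop (nhds (f ω))

/-- Continuity of an `ℝ^d`-valued functional on càdlàg paths with respect to the uniform norm
on `[0,T]` (sequential formulation). -/
def UnifContOnCadlagVec (T : ℝ) {d : ℕ} (F : (ℝ → Fin d → ℝ) → Fin d → ℝ) : Prop :=
  ∀ (ω : ℝ → Fin d → ℝ) (ωs : ℕ → ℝ → Fin d → ℝ),
    CadlagOn T ω → (∀ n, CadlagOn T (ωs n)) →
    TendstoUniformlyOn ωs ω atTop (Set.Icc 0 T) →
    Tendsto (fun n => F (ωs n)) atTop (nhds (F ω))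

/-- `F : [0,T] × D([0,T];ℝ^d) → ℝ^d` has left limits: whenever `ω^n → ω` uniformly on `[0,T]`
and `t^n ↑ t` with `t^n < t`, `F(t^n, ω^n)` converges to a limit depending only on `(t, ω)`. -/
def HasLeftLimits (T : ℝ) {d : ℕ} (F : (ℝ → Fin d → ℝ) → ℝ → Fin d → ℝ) : Prop :=
  ∀ ω : ℝ → Fin d → ℝ, CadlagOn T ω → ∀ t ∈ Set.Ioc (0 : ℝ) T, ∃ l : Fin d → ℝ,
    ∀ (ωs : ℕ → ℝ → Fin d → ℝ) (ts : ℕ → ℝ),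
      (∀ n, CadlagOn T (ωs n)) →
      TendstoUniformlyOn ωs ω atTop (Set.Icc 0 T) →
      (∀ n, ts n < t) → Monotone ts → Tendsto ts atTop (nhds t) →
      Tendsto (fun n => F (ωs n) (ts n)) atTop (nhds l)

/-- `F` is boundedness preserving: `sup_{t ∈ [0,T]} sup_{‖ω‖_∞ < K} |F(t, ω)| < ∞` for every
`K > 0`. -/
def BoundednessPreserving (T : ℝ) {d : ℕ} (F : (ℝ → Fin d → ℝ) → ℝ → Fin d → ℝ) : Prop :=
  ∀ K : ℝ, 0 < K → ∃ M : ℝ,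
    ∀ ω : ℝ → Fin d → ℝ, CadlagOn T ω → (∀ s ∈ Set.Icc (0 : ℝ) T, ‖ω s‖ < K) →
      ∀ t ∈ Set.Icc (0 : ℝ) T, ‖F ω t‖ ≤ M

end


/-!
Add the bumps `e_k 1_{[t_k,T]}` one at a time. Adding a bump `e 1_{[t,T]}` to a base path
`ω + εP` changes `f` by `ε ⟨𝔻_t f(ω + εP + c e 1_{[t,T]}), e⟩` for some `|c| ≤ |ε|`: by pathwise
differentiability, `s ↦ f(ω₀ + s e 1_{[t,T]})` is differentiable with that derivative, so this is
the mean value theorem. The intermediate paths converge uniformly to `ω` as `ε → 0`, so the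
continuity of `𝔻_t f` identifies the limit of each increment.
-/

open Filter Topology

section Cadlag

variable {T : ℝ} {d : ℕ}

lemma CadlagOn.add {ω ω' : ℝ → Fin d → ℝ} (h : CadlagOn T ω) (h' : CadlagOn T ω') :
    CadlagOn T (ω + ω') := by
  refine ⟨fun t ht => (h.1 t ht).add (h'.1 t ht), fun t ht => ?_⟩
  obtain ⟨l, hl⟩ := h.2 t ht
  obtain ⟨l', hl'⟩ := h'.2 t ht
  exact ⟨l + l', hl.add hl'⟩

lemma CadlagOn.const_smul {ω : ℝ → Fin d → ℝ} (h : CadlagOn T ω) (c : ℝ) :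
    CadlagOn T (c • ω) := by
  refine ⟨fun t ht => (h.1 t ht).const_smul c, fun t ht => ?_⟩
  obtain ⟨l, hl⟩ := h.2 t ht
  exact ⟨c • l, hl.const_smul c⟩

lemma cadlagOn_zero : CadlagOn T (0 : ℝ → Fin d → ℝ) :=
  ⟨fun _ _ => tendsto_const_nhds, fun _ _ => ⟨0, tendsto_const_nhds⟩⟩

lemma CadlagOn.sum {ι : Type*} (s : Finset ι) {g : ι → ℝ → Fin d → ℝ}
    (h : ∀ i ∈ s, CadlagOn T (g i)) : CadlagOn T (∑ i ∈ s, g i) :=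
  Finset.sum_induction g (CadlagOn T) (fun _ _ => CadlagOn.add)
    cadlagOn_zero h

lemma bump_of_lt {t u : ℝ} (e : Fin d → ℝ) (hu : u < t) : bump T t e u = 0 :=
  Set.indicator_of_notMem (fun h => (h.1.trans_lt hu).false) _

lemma bump_of_le_of_le {t u : ℝ} (e : Fin d → ℝ) (htu : t ≤ u) (huT : u ≤ T) :
    bump T t e u = e :=
  Set.indicator_of_mem (Set.mem_Icc.2 ⟨htu, huT⟩) _

lemma norm_bump_le (t : ℝ) (e : Fin d → ℝ) (u : ℝ) : ‖bump T t e u‖ ≤ ‖e‖ :=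
  norm_indicator_le_norm_self _ u

lemma norm_sum_bump_le {ι : Type*} (s : Finset ι) (t : ι → ℝ) (e : ι → Fin d → ℝ) (u : ℝ) :
    ‖(∑ k ∈ s, bump T (t k) (e k)) u‖ ≤ ∑ k ∈ s, ‖e k‖ := by
  rw [Finset.sum_apply]
  exact norm_sum_le_of_le s fun k _ => norm_bump_le _ _ u

lemma cadlagOn_bump (t : ℝ) (e : Fin d → ℝ) : CadlagOn T (bump T t e) := by
  refine ⟨fun s hs => ?_, fun s hs => ?_⟩
  · rcases lt_or_ge s t with hst | hts
    · rw [bump_of_lt e hst]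
      refine tendsto_const_nhds.congr' ?_
      filter_upwards [nhdsWithin_le_nhds (eventually_lt_nhds hst)] with u hu
      exact (bump_of_lt e hu).symm
    · rw [bump_of_le_of_le e hts hs.2.le]
      refine tendsto_const_nhds.congr' ?_
      filter_upwards [self_mem_nhdsWithin] with u hu
      exact (bump_of_le_of_le e (hts.trans hu.1.le) hu.2).symm
  · rcases le_or_gt s t with hst | hts
    · refine ⟨0, tendsto_const_nhds.congr' ?_⟩
      filter_upwards [self_mem_nhdsWithin] with u hu
      exact (bump_of_lt e (hu.2.trans_le hst)).symm
    · refine ⟨e, tendsto_const_nhds.congr' ?_⟩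
      filter_upwards [self_mem_nhdsWithin, nhdsWithin_le_nhds (eventually_gt_nhds hts)]
        with u hu htu
      exact (bump_of_le_of_le e htu.le (hu.2.le.trans hs.2)).symm

end Cadlag

lemma tendstoUniformlyOn_smul_zero {α X 𝕜 E : Type*} [NormedField 𝕜] [SeminormedAddCommGroup E]
    [NormedSpace 𝕜 E] {l : Filter α} {s : Set X} {a : α → 𝕜} {P : X → E} {C : ℝ}
    (ha : Tendsto a l (𝓝 0)) (hP : ∀ u ∈ s, ‖P u‖ ≤ C) :
    TendstoUniformlyOn (fun x => a x • P) 0 l s := by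
  change TendstoUniformlyOn _ (fun _ => (0 : E)) l s
  rw [← tendsto_prod_principal_iff]
  refine (ha.comp tendsto_fst).zero_smul_isBoundedUnder_le ⟨C, ?_⟩
  rw [eventually_map]
  exact mem_prod_principal.2 (Eventually.of_forall fun _ u hu => hP u hu)

lemma exists_abs_le_hasDerivAt_eq_div {u D : ℝ → ℝ} (hu : ∀ s, HasDerivAt u (D s) s) {ε : ℝ}
    (hε : ε ≠ 0) : ∃ c, |c| ≤ |ε| ∧ (u ε - u 0) / ε = D c := by
  have hcont : Continuous u := continuous_iff_continuousAt.2 fun s => (hu s).continuousAt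
  rcases hε.lt_or_gt with hneg | hpos
  · obtain ⟨c, hc, hslope⟩ :=
      exists_hasDerivAt_eq_slope u D hneg hcont.continuousOn fun s _ => hu s
    refine ⟨c, by rw [abs_of_neg hneg, abs_le]; constructor <;> linarith [hc.1, hc.2], ?_⟩
    rw [hslope, zero_sub, div_neg, ← neg_div, neg_sub]
  · obtain ⟨c, hc, hslope⟩ :=
      exists_hasDerivAt_eq_slope u D hpos hcont.continuousOn fun s _ => hu s
    refine ⟨c, by rw [abs_of_pos hpos, abs_le]; constructor <;> linarith [hc.1, hc.2], ?_⟩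
    rw [hslope, sub_zero]

lemma UnifContOnCadlagVec.tendsto_comp {T : ℝ} {d : ℕ} {F : (ℝ → Fin d → ℝ) → Fin d → ℝ}
    (hF : UnifContOnCadlagVec T F) {α : Type*} {l : Filter α} [l.IsCountablyGenerated]
    {γ : α → ℝ → Fin d → ℝ} {ω : ℝ → Fin d → ℝ} (hω : CadlagOn T ω)
    (hγ : ∀ a, CadlagOn T (γ a)) (hγω : TendstoUniformlyOn γ ω l (Set.Icc 0 T)) :
    Tendsto (fun a => F (γ a)) l (𝓝 (F ω)) :=
  tendsto_iff_seq_tendsto.2 fun x hx =>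
    hF ω (fun n => γ (x n)) hω (fun n => hγ (x n)) fun _ hu => hx (hγω _ hu)

namespace HasPathwiseMalliavinDeriv

variable {T : ℝ} {d : ℕ} {f : (ℝ → Fin d → ℝ) → ℝ} {Df : (ℝ → Fin d → ℝ) → ℝ → Fin d → ℝ}

lemma hasDerivAt_smul_bump (hdiff : HasPathwiseMalliavinDeriv T f Df)
    {ω₀ : ℝ → Fin d → ℝ} (hω₀ : CadlagOn T ω₀) {t : ℝ} (ht : t ∈ Set.Icc 0 T)
    (e : Fin d → ℝ) (s : ℝ) :
    HasDerivAt (fun s : ℝ => f (ω₀ + s • bump T t e))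
      (∑ i, Df (ω₀ + s • bump T t e) t i * e i) s := by
  rw [hasDerivAt_iff_tendsto_slope_zero]
  refine (hdiff _ (hω₀.add ((cadlagOn_bump t e).const_smul s)) t ht e).congr fun ε => ?_
  rw [add_smul, ← add_assoc, smul_eq_mul, div_eq_inv_mul]

lemma exists_abs_le_div_eq (hdiff : HasPathwiseMalliavinDeriv T f Df)
    {ω₀ : ℝ → Fin d → ℝ} (hω₀ : CadlagOn T ω₀) {t : ℝ} (ht : t ∈ Set.Icc 0 T)
    (e : Fin d → ℝ) {ε : ℝ} (hε : ε ≠ 0) :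
    ∃ c, |c| ≤ |ε| ∧
      (f (ω₀ + ε • bump T t e) - f ω₀) / ε = ∑ i, Df (ω₀ + c • bump T t e) t i * e i := by
  simpa using exists_abs_le_hasDerivAt_eq_div (hdiff.hasDerivAt_smul_bump hω₀ ht e) hε

lemma tendsto_bump_increment (hdiff : HasPathwiseMalliavinDeriv T f Df) {t : ℝ}
    (ht : t ∈ Set.Icc 0 T) (hDcont : UnifContOnCadlagVec T (fun ω => Df ω t))
    {ω P : ℝ → Fin d → ℝ} (hω : CadlagOn T ω) (hP : CadlagOn T P) {C : ℝ}
    (hPC : ∀ u ∈ Set.Icc 0 T, ‖P u‖ ≤ C) (e : Fin d → ℝ) :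
    Tendsto (fun ε : ℝ => (f (ω + ε • P + ε • bump T t e) - f (ω + ε • P)) / ε)
      (𝓝[≠] 0) (𝓝 (∑ i, Df ω t i * e i)) := by
  have hstep : ∀ ε : ℝ, ∃ c, |c| ≤ |ε| ∧ (ε ≠ 0 →
      (f (ω + ε • P + ε • bump T t e) - f (ω + ε • P)) / ε
        = ∑ i, Df (ω + ε • P + c • bump T t e) t i * e i) := by
    intro ε
    rcases eq_or_ne ε 0 with rfl | hε
    · exact ⟨0, le_rfl, fun h => (h rfl).elim⟩
    · obtain ⟨c, hc, hq⟩ := hdiff.exists_abs_le_div_eq (hω.add (hP.const_smul ε)) ht e hε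
      exact ⟨c, hc, fun _ => hq⟩
  choose ξ hξ_le hξ_eq using hstep
  have hid : Tendsto (fun ε : ℝ => ε) (𝓝[≠] 0) (𝓝 0) := nhdsWithin_le_nhds
  have hξ : Tendsto ξ (𝓝[≠] 0) (𝓝 0) := squeeze_zero_norm (a := fun ε => |ε|)
    (fun ε => (Real.norm_eq_abs _).trans_le (hξ_le ε)) (by simpa using hid.abs)
  have hconst : TendstoUniformlyOn (fun _ : ℝ => ω) ω (𝓝[≠] 0) (Set.Icc 0 T) :=
    fun _ hu => .of_forall fun _ _ _ => refl_mem_uniformity hu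
  have hunif : TendstoUniformlyOn (fun ε : ℝ => ω + ε • P + ξ ε • bump T t e) ω
      (𝓝[≠] 0) (Set.Icc 0 T) := by
    have h := (hconst.add (tendstoUniformlyOn_smul_zero hid hPC)).add
      (tendstoUniformlyOn_smul_zero hξ fun u _ => norm_bump_le (T := T) t e u)
    rwa [add_zero, add_zero] at h
  have hDf := hDcont.tendsto_comp hω
    (fun ε => (hω.add (hP.const_smul ε)).add ((cadlagOn_bump t e).const_smul (ξ ε))) hunif
  refine (tendsto_finsetSum _ fun i _ => (tendsto_pi_nhds.1 hDf i).mul_const (e i)).congr' ?_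
  filter_upwards [self_mem_nhdsWithin] with ε hε
  exact (hξ_eq ε hε).symm

theorem tendsto_sum_bump (hdiff : HasPathwiseMalliavinDeriv T f Df)
    (hDcont : ∀ t ∈ Set.Icc (0 : ℝ) T, UnifContOnCadlagVec T (fun ω => Df ω t))
    {ω : ℝ → Fin d → ℝ} (hω : CadlagOn T ω) {ι : Type*} (s : Finset ι) (e : ι → Fin d → ℝ)
    (t : ι → ℝ) (ht : ∀ k ∈ s, t k ∈ Set.Icc 0 T) :
    Tendsto (fun ε : ℝ => (f (ω + ε • ∑ k ∈ s, bump T (t k) (e k)) - f ω) / ε)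
      (𝓝[≠] 0) (𝓝 (∑ k ∈ s, ∑ i, Df ω (t k) i * e k i)) := by
  classical
  induction s using Finset.induction_on with
  | empty => simp
  | insert a s ha ih =>
    set P := ∑ k ∈ s, bump T (t k) (e k)
    have hta := ht a (Finset.mem_insert_self a s)
    have hnew := hdiff.tendsto_bump_increment hta (hDcont _ hta) hω
      (CadlagOn.sum s fun k _ => cadlagOn_bump (t k) (e k))
      (fun u _ => norm_sum_bump_le s t e u) (e a)
    have hlim : ∑ k ∈ insert a s, ∑ i, Df ω (t k) i * e k i
        = ∑ k ∈ s, ∑ i, Df ω (t k) i * e k i + ∑ i, Df ω (t a) i * e a i := by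
      rw [Finset.sum_insert ha, add_comm]
    rw [hlim]
    refine ((ih fun k hk => ht k (Finset.mem_insert_of_mem hk)).add hnew).congr fun ε => ?_
    have hsplit : ω + ε • ∑ k ∈ insert a s, bump T (t k) (e k)
        = ω + ε • P + ε • bump T (t a) (e a) := by
      rw [Finset.sum_insert ha, smul_add]
      abel
    rw [hsplit]
    ring

end HasPathwiseMalliavinDeriv

theorem statement_3_general (T : ℝ) {d : ℕ}
    (f : (ℝ → Fin d → ℝ) → ℝ) (Df : (ℝ → Fin d → ℝ) → ℝ → Fin d → ℝ)
    (hdiff : HasPathwiseMalliavinDeriv T f Df)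
    (hDcont : ∀ t ∈ Set.Icc (0 : ℝ) T, UnifContOnCadlagVec T (fun ω => Df ω t))
    (ω : ℝ → Fin d → ℝ) (hω : CadlagOn T ω)
    (n : ℕ) (e : Fin n → Fin d → ℝ) (tk : Fin n → ℝ)
    (htk : ∀ k, tk k ∈ Set.Icc (0 : ℝ) T) :
    Tendsto (fun ε : ℝ => (f (ω + ε • ∑ k, bump T (tk k) (e k)) - f ω) / ε)
      (nhdsWithin 0 {(0 : ℝ)}ᶜ)
      (nhds (∑ k, ∑ i, Df ω (tk k) i * e k i)) :=
  hdiff.tendsto_sum_bump hDcont hω Finset.univ e tk fun k _ => htk k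

/-- If `f : D([0,T];ℝ^d) → ℝ` is pathwise Malliavin differentiable with
derivative `𝔻f`, and `f` and each `ω ↦ 𝔻_t f(ω)` are continuous with respect to the uniform
norm, then for every càdlàg `ω` and every simple step path `η = Σ_{k=1}^n e_k 1_{[t_k,T]}`,
`lim_{ε→0} (f(ω + εη) − f(ω))/ε = Σ_{k=1}^n ⟨𝔻_{t_k} f(ω), e_k⟩`. -/
theorem statement_3 (T : ℝ) (hT : 0 < T) {d : ℕ}
    (f : (ℝ → Fin d → ℝ) → ℝ) (Df : (ℝ → Fin d → ℝ) → ℝ → Fin d → ℝ)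
    (hdiff : HasPathwiseMalliavinDeriv T f Df)
    (hfcont : UnifContOnCadlag T f)
    (hDcont : ∀ t ∈ Set.Icc (0 : ℝ) T, UnifContOnCadlagVec T (fun ω => Df ω t))
    (ω : ℝ → Fin d → ℝ) (hω : CadlagOn T ω)
    (n : ℕ) (e : Fin n → Fin d → ℝ) (tk : Fin n → ℝ)
    (htk : ∀ k, tk k ∈ Set.Icc (0 : ℝ) T) :
    Tendsto (fun ε : ℝ => (f (ω + ε • ∑ k, bump T (tk k) (e k)) - f ω) / ε)
      (nhdsWithin 0 {(0 : ℝ)}ᶜ)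
      (nhds (∑ k, ∑ i, Df ω (tk k) i * e k i)) :=
  statement_3_general T f Df hdiff hDcont ω hω n e tk htk
end
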